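/- Let F1 and F2 be finite subsets of ℤ² such that F1 is uniquely determined by its row and column sums, |F1| = |F2|, F1 ∩ F2 = ∅, and the error in the line sums equals 2α for a positive integer α. Then |F1| ≤ α(1 + log α), where log denotes the natural logarithm. -/

import Mathlib

/-- Number of elements of `F` in row `i` (points with first coordinate `i`). -/
def rowSum (F : Finset (ℤ × ℤ)) (i : ℤ) : ℕ := (F.filter (fun p => p.1 = i)).card

/-- Number of elements of `F` in column `j` (points with second coordinate `j`). -/
def colSum (F : Finset (ℤ × ℤ)) (j : ℤ) : ℕ := (F.filter (fun p => p.2 = j)).card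

/-- The total error in the line sums of `F` and `G`:
`∑ i |r_i(F) − r_i(G)| + ∑ j |c_j(F) − c_j(G)|`. -/
noncomputable def lineError (F G : Finset (ℤ × ℤ)) : ℤ :=
  (∑ᶠ i : ℤ, |(rowSum F i : ℤ) - (rowSum G i : ℤ)|) +
  (∑ᶠ j : ℤ, |(colSum F j : ℤ) - (colSum G j : ℤ)|)

/-- `F` is uniquely determined by its row and column sums. -/
def UniquelyDetermined (F : Finset (ℤ × ℤ)) : Prop :=
  ∀ G : Finset (ℤ × ℤ),
    (∀ i, rowSum G i = rowSum F i) → (∀ j, colSum G j = colSum F j) → G = F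

/-!
Uniqueness forbids switching components: if `(i, j), (i', j') ∈ F1` then `(i, j') ∈ F1` or
`(i', j) ∈ F1`, since otherwise exchanging the two pairs preserves all line sums. Hence the rows
of `F1`, viewed as sets of columns, form a chain ordered by row sum. Fix a row `i`, let `I` be the
rows whose sum is at least `r_i` and `J` the columns occupied in row `i`. Then `I × J ⊆ F1` and
every point of `F1` lies in a row of `I` or a column of `J`, so these lines contain
`|F1| + |I||J|` points of `F1` but at most `|F2| = |F1|` points of `F2` (which misses `I × J`).
As the discrepancies of each family of lines sum to zero, the error is at least `2|I||J|`.
So the `k`-th largest row sum is at most `α / k`, and summing over the `m ≤ α` rows gives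
`|F1| ≤ α H_m ≤ α (1 + log α)`.
-/

open Finset

theorem two_nsmul_sum_le_sum_abs {β G : Type*} [DecidableEq β] [AddCommGroup G] [LinearOrder G]
    [IsOrderedAddMonoid G] {I U : Finset β} (hIU : I ⊆ U) {g : β → G}
    (hg : ∑ b ∈ U, g b = 0) : 2 • ∑ b ∈ I, g b ≤ ∑ b ∈ U, |g b| := by
  have hsplit : ∑ b ∈ U \ I, g b = -∑ b ∈ I, g b :=
    eq_neg_of_add_eq_zero_left ((sum_sdiff hIU).trans hg)
  calc 2 • ∑ b ∈ I, g b = -∑ b ∈ U \ I, g b + ∑ b ∈ I, g b := by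
        rw [hsplit, neg_neg, two_nsmul]
    _ ≤ ∑ b ∈ U \ I, |g b| + ∑ b ∈ I, |g b| := by
        gcongr
        · rw [← sum_neg_distrib]; exact sum_le_sum fun b _ => neg_le_abs _
        · exact le_abs_self _
    _ = ∑ b ∈ U, |g b| := sum_sdiff hIU

theorem two_mul_card_filter_sub_le_finsum_abs {α β : Type*} [DecidableEq β] {s t : Finset α}
    (hst : #s = #t) (f : α → β) (I : Finset β) :
    2 * ((#{a ∈ s | f a ∈ I} : ℤ) - #{a ∈ t | f a ∈ I}) ≤
      ∑ᶠ b, |(#{a ∈ s | f a = b} : ℤ) - #{a ∈ t | f a = b}| := by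
  set U := s.image f ∪ t.image f ∪ I
  have hsU : s.image f ⊆ U := subset_union_left.trans subset_union_left
  have htU : t.image f ⊆ U := subset_union_right.trans subset_union_left
  have hfiber_zero {u : Finset α} (hu : u.image f ⊆ U) {b : β} (hb : b ∉ U) :
      #{a ∈ u | f a = b} = 0 :=
    card_eq_zero.2 <| filter_eq_empty_iff.2 fun a ha hab => hb (hu (hab ▸ mem_image_of_mem f ha))
  have hcard_eq {u : Finset α} (hu : u.image f ⊆ U) : #u = ∑ b ∈ U, #{a ∈ u | f a = b} :=
    card_eq_sum_card_fiberwise fun a ha => hu (mem_image_of_mem f ha)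
  rw [finsum_eq_sum_of_support_subset _ (s := U) fun b hb => by
    by_contra h
    simp [hfiber_zero hsU h, hfiber_zero htU h] at hb]
  have hsum : ∑ b ∈ U, ((#{a ∈ s | f a = b} : ℤ) - #{a ∈ t | f a = b}) = 0 := by
    rw [sum_sub_distrib, sub_eq_zero]
    exact_mod_cast (hcard_eq hsU).symm.trans (hst.trans (hcard_eq htU))
  have := two_nsmul_sum_le_sum_abs (subset_union_right : I ⊆ U) hsum
  rwa [sum_sub_distrib, two_nsmul, ← two_mul, ← Nat.cast_sum, ← Nat.cast_sum,
    sum_card_fiberwise_eq_card_filter, sum_card_fiberwise_eq_card_filter] at this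

theorem card_filter_add_card_filter_eq_card_add_card_mul_card {α β : Type*} [DecidableEq α]
    [DecidableEq β] {F : Finset (α × β)} {I : Finset α} {J : Finset β}
    (hrect : I ×ˢ J ⊆ F) (hcover : ∀ p ∈ F, p.1 ∈ I ∨ p.2 ∈ J) :
    #{p ∈ F | p.1 ∈ I} + #{p ∈ F | p.2 ∈ J} = #F + #I * #J := by
  rw [← card_union_add_card_inter, ← filter_or, ← filter_and, filter_true_of_mem hcover,
    ← card_product]
  congr 2
  ext p
  simp only [mem_filter, mem_product]
  exact ⟨And.right, fun h => ⟨hrect (mem_product.2 h), h⟩⟩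

theorem card_filter_add_card_filter_le_card {α β : Type*} [DecidableEq α] [DecidableEq β]
    {G : Finset (α × β)} {I : Finset α} {J : Finset β} (hG : Disjoint G (I ×ˢ J)) :
    #{p ∈ G | p.1 ∈ I} + #{p ∈ G | p.2 ∈ J} ≤ #G := by
  rw [← card_union_add_card_inter, ← filter_or, ← filter_and,
    filter_false_of_mem fun p hp h => disjoint_left.1 hG hp (mem_product.2 h), card_empty, add_zero]
  exact card_filter_le _ _

theorem two_mul_card_mul_card_le_lineError {F1 F2 : Finset (ℤ × ℤ)} (hcard : #F1 = #F2)
    (hdisj : Disjoint F1 F2) {I J : Finset ℤ} (hrect : I ×ˢ J ⊆ F1)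
    (hcover : ∀ p ∈ F1, p.1 ∈ I ∨ p.2 ∈ J) :
    2 * (#I * #J : ℤ) ≤ lineError F1 F2 := by
  have hrow := two_mul_card_filter_sub_le_finsum_abs hcard Prod.fst I
  have hcol := two_mul_card_filter_sub_le_finsum_abs hcard Prod.snd J
  have h1 := card_filter_add_card_filter_eq_card_add_card_mul_card hrect hcover
  have h2 := card_filter_add_card_filter_le_card (hdisj.symm.mono_right hrect)
  unfold lineError rowSum colSum
  linarith

theorem sum_insert_insert_erase_erase {α M : Type*} [DecidableEq α] [AddCancelCommMonoid M]
    {s : Finset α} {a b c d : α} (hab : a ≠ b) (hcd : c ≠ d) (ha : a ∈ s) (hb : b ∈ s)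
    (hc : c ∉ s) (hd : d ∉ s) {w : α → M} (hw : w a + w b = w c + w d) :
    ∑ x ∈ insert c (insert d ((s.erase a).erase b)), w x = ∑ x ∈ s, w x := by
  have hb' : b ∈ s.erase a := mem_erase.2 ⟨hab.symm, hb⟩
  have hd' : d ∉ (s.erase a).erase b := fun h => hd (mem_of_mem_erase (mem_of_mem_erase h))
  have hc' : c ∉ insert d ((s.erase a).erase b) := fun h =>
    hc (mem_of_mem_erase (mem_of_mem_erase (mem_of_mem_insert_of_ne h hcd)))
  rw [sum_insert hc', sum_insert hd', ← add_sum_erase s w ha, ← add_sum_erase _ w hb',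
    ← add_assoc, ← add_assoc, hw]

theorem UniquelyDetermined.mem_or_mem {F : Finset (ℤ × ℤ)} (hU : UniquelyDetermined F)
    {i j i' j' : ℤ} (h : (i, j) ∈ F) (h' : (i', j') ∈ F) : (i, j') ∈ F ∨ (i', j) ∈ F := by
  by_contra! ⟨hc, hd⟩
  have hab : (i, j) ≠ (i', j') := fun e => hc (by rw [(Prod.mk.inj e).1]; exact h')
  have hcd : (i, j') ≠ (i', j) := fun e => hc (by rw [(Prod.mk.inj e).1]; exact h')
  have hG := hU (insert (i, j') (insert (i', j) ((F.erase (i, j)).erase (i', j'))))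
    (fun r => ?_) (fun r => ?_)
  · exact hc (hG ▸ mem_insert_self _ _)
  · rw [rowSum, rowSum, card_filter, card_filter]
    exact sum_insert_insert_erase_erase hab hcd h h' hc hd rfl
  · rw [colSum, colSum, card_filter, card_filter]
    exact sum_insert_insert_erase_erase hab hcd h h' hc hd (add_comm _ _)

def rowSupport (F : Finset (ℤ × ℤ)) (i : ℤ) : Finset ℤ := {p ∈ F | p.1 = i}.image Prod.snd

theorem mem_rowSupport {F : Finset (ℤ × ℤ)} {i j : ℤ} : j ∈ rowSupport F i ↔ (i, j) ∈ F := by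
  simp [rowSupport]

theorem card_rowSupport (F : Finset (ℤ × ℤ)) (i : ℤ) : #(rowSupport F i) = rowSum F i :=
  card_image_of_injOn fun _ hp _ hq h =>
    Prod.ext ((mem_filter.1 hp).2.trans (mem_filter.1 hq).2.symm) h

theorem UniquelyDetermined.rowSupport_subset {F : Finset (ℤ × ℤ)} (hU : UniquelyDetermined F)
    {i i' : ℤ} (h : rowSum F i ≤ rowSum F i') : rowSupport F i ⊆ rowSupport F i' := by
  by_contra hsub
  obtain ⟨j, hj, hj'⟩ := not_subset.1 hsub
  have hrev : rowSupport F i' ⊆ rowSupport F i := fun k hk =>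
    mem_rowSupport.2 <| (hU.mem_or_mem (mem_rowSupport.1 hj) (mem_rowSupport.1 hk)).resolve_right
      (mt mem_rowSupport.2 hj')
  have hlt := card_lt_card ((ssubset_iff_of_subset hrev).2 ⟨j, hj, hj'⟩)
  rw [card_rowSupport, card_rowSupport] at hlt
  omega

theorem UniquelyDetermined.two_mul_card_mul_rowSum_le_lineError {F1 F2 : Finset (ℤ × ℤ)}
    (hU : UniquelyDetermined F1) (hcard : #F1 = #F2) (hdisj : Disjoint F1 F2) (i : ℤ) :
    2 * (#{i' ∈ F1.image Prod.fst | rowSum F1 i ≤ rowSum F1 i'} * rowSum F1 i : ℤ) ≤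
      lineError F1 F2 := by
  have hrect : {i' ∈ F1.image Prod.fst | rowSum F1 i ≤ rowSum F1 i'} ×ˢ rowSupport F1 i ⊆ F1 := by
    rintro ⟨i', j⟩ hp
    obtain ⟨hi', hj⟩ := mem_product.1 hp
    exact mem_rowSupport.1 (hU.rowSupport_subset (mem_filter.1 hi').2 hj)
  have hcover : ∀ p ∈ F1, p.1 ∈ {i' ∈ F1.image Prod.fst | rowSum F1 i ≤ rowSum F1 i'} ∨
      p.2 ∈ rowSupport F1 i := by
    intro p hp
    by_cases h : rowSum F1 i ≤ rowSum F1 p.1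
    · exact .inl (mem_filter.2 ⟨mem_image_of_mem _ hp, h⟩)
    · exact .inr (hU.rowSupport_subset (le_of_not_ge h) (mem_rowSupport.2 hp))
  simpa [card_rowSupport] using two_mul_card_mul_card_le_lineError hcard hdisj hrect hcover

theorem sum_le_mul_harmonic {ι : Type*} (s : Finset ι) (r : ι → ℝ) (a : ℝ)
    (hr : ∀ i ∈ s, 0 ≤ r i) (h : ∀ i ∈ s, #{j ∈ s | r i ≤ r j} * r i ≤ a) :
    ∑ i ∈ s, r i ≤ a * harmonic #s := by
  classical
  induction s using induction_on_min_value (ι := ι) r with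
  | empty => simp
  | insert i s hi hmin ih =>
    have hs : ∑ j ∈ s, r j ≤ a * harmonic #s := by
      refine ih (fun j hj => hr j (mem_insert_of_mem hj)) fun j hj =>
        le_trans ?_ (h j (mem_insert_of_mem hj))
      gcongr
      · exact hr j (mem_insert_of_mem hj)
      · exact subset_insert i s
    have hri : (#s + 1 : ℝ) * r i ≤ a := by
      have := h i (mem_insert_self i s)
      rwa [filter_true_of_mem fun j hj => (mem_insert.1 hj).elim (fun e => e ▸ le_rfl) (hmin j),
        card_insert_of_notMem hi, Nat.cast_succ] at this
    rw [sum_insert hi, card_insert_of_notMem hi, harmonic_succ]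
    push_cast
    rw [mul_add, ← div_eq_mul_inv]
    have := (le_div_iff₀' (by positivity : (0:ℝ) < #s + 1)).2 hri
    linarith

theorem sum_le_mul_one_add_log {ι : Type*} (s : Finset ι) (r : ι → ℕ) (a : ℕ)
    (hr : ∀ i ∈ s, 0 < r i) (h : ∀ i ∈ s, #{j ∈ s | r i ≤ r j} * r i ≤ a) :
    (∑ i ∈ s, r i : ℝ) ≤ a * (1 + Real.log a) := by
  rcases s.eq_empty_or_nonempty with rfl | hne
  · simpa using by positivity
  have hcard : #s ≤ a := by
    obtain ⟨i, hi, hmin⟩ := exists_min_image s r hne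
    have hi' := h i hi
    rw [filter_true_of_mem hmin] at hi'
    exact le_trans (Nat.le_mul_of_pos_right _ (hr i hi)) hi'
  calc (∑ i ∈ s, r i : ℝ) ≤ a * harmonic #s :=
        sum_le_mul_harmonic s (fun i => r i) a (fun i _ => by positivity) fun i hi => by
          simp only [Nat.cast_le]
          exact_mod_cast h i hi
    _ ≤ a * (1 + Real.log #s) := by gcongr; exact harmonic_le_one_add_log _
    _ ≤ a * (1 + Real.log a) := by gcongr

theorem disjoint_bound_log_general
    (F1 F2 : Finset (ℤ × ℤ))
    (hU : UniquelyDetermined F1)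
    (hcard : F1.card = F2.card)
    (hdisj : F1 ∩ F2 = ∅)
    (α : ℕ)
    (herr : lineError F1 F2 = 2 * α) :
    (F1.card : ℝ) ≤ α * (1 + Real.log α) := by
  have hrows : ∀ i ∈ F1.image Prod.fst,
      #{i' ∈ F1.image Prod.fst | rowSum F1 i ≤ rowSum F1 i'} * rowSum F1 i ≤ α := fun i _ => by
    have := hU.two_mul_card_mul_rowSum_le_lineError hcard (disjoint_iff_inter_eq_empty.2 hdisj) i
    rw [herr] at this
    exact_mod_cast (mul_le_mul_iff_right₀ two_pos).1 this
  have hpos : ∀ i ∈ F1.image Prod.fst, 0 < rowSum F1 i := by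
    intro i hi
    obtain ⟨p, hp, rfl⟩ := mem_image.1 hi
    exact card_pos.2 ⟨p, mem_filter.2 ⟨hp, rfl⟩⟩
  calc (F1.card : ℝ) = ∑ i ∈ F1.image Prod.fst, (rowSum F1 i : ℝ) := by
        rw [card_eq_sum_card_image Prod.fst F1, Nat.cast_sum]; rfl
    _ ≤ α * (1 + Real.log α) := sum_le_mul_one_add_log _ _ α hpos hrows

theorem disjoint_bound_log
    (F1 F2 : Finset (ℤ × ℤ))
    (hU : UniquelyDetermined F1)
    (hcard : F1.card = F2.card)
    (hdisj : F1 ∩ F2 = ∅)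
    (α : ℕ) (hα : 0 < α)
    (herr : lineError F1 F2 = 2 * α) :
    (F1.card : ℝ) ≤ α * (1 + Real.log α) :=
  disjoint_bound_log_general F1 F2 hU hcard hdisj α herr
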